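/- arXiv:2605.19089 — 5 statements merged into one kernel-verified Lean document; each statement's English description precedes it below -/
import Mathlib

section
/- In the discrete optimal path parameterization setup, suppose that for every k each component of f_k and of h_k is a convex function, the terminal set X_f is convex and compact, and for every k the set {(x,u) ∈ ℝ^d × ℝ : f_k(x) ≤ 0 and h_k(x,u) ≤ 0} is compact. Then for every k = 0,…,N the backward reachable set B_k is convex and compact. -/
open Set

/-- Data of a discrete optimal path parameterization problem: dynamics matrices `A k`,
vectors `b k`, componentwise state constraints `f k`, mixed state-control constraints `h k`,
and terminal set `Xf`. -/
structure DiscreteOPP (N d : ℕ) where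
  A : ℕ → Matrix (Fin d) (Fin d) ℝ
  b : ℕ → Fin d → ℝ
  m : ℕ → ℕ
  q : ℕ → ℕ
  f : (k : ℕ) → (Fin d → ℝ) → Fin (m k) → ℝ
  h : (k : ℕ) → (Fin d → ℝ) → ℝ → Fin (q k) → ℝ
  Xf : Set (Fin d → ℝ)

namespace DiscreteOPP

variable {N d : ℕ} (P : DiscreteOPP N d)

/-- One step of the dynamics: `x_{k+1} = A_k x_k + b_k u_k`. -/
def step (k : ℕ) (x : Fin d → ℝ) (u : ℝ) : Fin d → ℝ :=
  (P.A k).mulVec x + u • P.b k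

/-- A feasible continuation from stage `k`: the dynamics, state constraints and mixed
constraints hold for all `k ≤ j < N`, and the terminal state lies in `Xf`. -/
def FeasFrom (k : ℕ) (x : ℕ → Fin d → ℝ) (u : ℕ → ℝ) : Prop :=
  (∀ j, k ≤ j → j < N →
      x (j + 1) = P.step j (x j) (u j) ∧ (∀ i, P.f j (x j) i ≤ 0) ∧
        (∀ i, P.h j (x j) (u j) i ≤ 0)) ∧
    x N ∈ P.Xf

/-- The backward reachable set `B_k`: states from which a feasible continuation to `Xf`
exists.  Note that `BRS N = Xf`. -/
def BRS (k : ℕ) : Set (Fin d → ℝ) :=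
  {x0 | ∃ x u, x k = x0 ∧ P.FeasFrom k x u}

end DiscreteOPP
open Set

lemma BRS_last {N d : ℕ} (P : DiscreteOPP N d) : P.BRS N = P.Xf := by
  ext x0
  simp only [DiscreteOPP.BRS, DiscreteOPP.FeasFrom, mem_setOf_eq]
  constructor
  · rintro ⟨x, u, rfl, -, hXf⟩
    exact hXf
  · intro hx
    exact ⟨fun _ => x0, fun _ => 0, rfl, fun j hj hj' => absurd hj' (by omega), hx⟩

lemma BRS_rec {N d : ℕ} (P : DiscreteOPP N d) (k : ℕ) (hk : k < N) :
    P.BRS k = Prod.fst '' {z : (Fin d → ℝ) × ℝ |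
      (∀ i, P.f k z.1 i ≤ 0) ∧ (∀ i, P.h k z.1 z.2 i ≤ 0) ∧
        P.step k z.1 z.2 ∈ P.BRS (k + 1)} := by
  ext x0
  simp only [DiscreteOPP.BRS, DiscreteOPP.FeasFrom, mem_setOf_eq, mem_image]
  constructor
  · rintro ⟨x, u, rfl, hdyn, hXf⟩
    refine ⟨(x k, u k), ⟨(hdyn k le_rfl hk).2.1, (hdyn k le_rfl hk).2.2, ?_⟩, rfl⟩
    exact ⟨x, u, (hdyn k le_rfl hk).1,
      fun j hj hj' => hdyn j (by omega) hj', hXf⟩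
  · rintro ⟨⟨xk, uk⟩, ⟨hfk, hhk, x', u', hx', hdyn, hXf⟩, rfl⟩
    refine ⟨Function.update x' k xk, Function.update u' k uk,
      Function.update_self _ _ _, ?_, ?_⟩
    · intro j hj hj'
      rcases eq_or_lt_of_le hj with rfl | hlt
      · refine ⟨?_, ?_, ?_⟩
        · rw [Function.update_of_ne (by omega), hx', Function.update_self,
            Function.update_self]
        · simpa [Function.update_self] using hfk
        · simpa [Function.update_self] using hhk
      · have h1 : j ≠ k := by omega
        have h2 : j + 1 ≠ k := by omega
        rw [Function.update_of_ne h2, Function.update_of_ne h1, Function.update_of_ne h1]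
        exact hdyn j (by omega) hj'
    · rw [Function.update_of_ne (by omega)]
      exact hXf

/-- if each component of `f_k` and `h_k` is convex, the terminal set is convex
and compact, and the stagewise constraint sets are compact, then every backward reachable
set `B_k` is convex and compact. -/
theorem statement_1 {N d : ℕ} (hN : 1 ≤ N) (hd : 1 ≤ d) (P : DiscreteOPP N d)
    (hf : ∀ k i, ConvexOn ℝ univ fun x => P.f k x i)
    (hh : ∀ k i, ConvexOn ℝ univ fun z : (Fin d → ℝ) × ℝ => P.h k z.1 z.2 i)
    (hXfconv : Convex ℝ P.Xf) (hXfcpt : IsCompact P.Xf)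
    (hcpt : ∀ k, IsCompact {z : (Fin d → ℝ) × ℝ |
      (∀ i, P.f k z.1 i ≤ 0) ∧ (∀ i, P.h k z.1 z.2 i ≤ 0)}) :
    ∀ k ≤ N, Convex ℝ (P.BRS k) ∧ IsCompact (P.BRS k) := by
  have hcontf : ∀ k i, Continuous fun x => P.f k x i := fun k i =>
    continuousOn_univ.mp ((hf k i).continuousOn isOpen_univ)
  have hconth : ∀ k i, Continuous fun z : (Fin d → ℝ) × ℝ => P.h k z.1 z.2 i := fun k i =>
    continuousOn_univ.mp ((hh k i).continuousOn isOpen_univ)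
  have hcontstep : ∀ k, Continuous fun z : (Fin d → ℝ) × ℝ => P.step k z.1 z.2 := by
    intro k
    have h1 : Continuous fun z : (Fin d → ℝ) × ℝ => (P.A k).mulVec z.1 :=
      ((P.A k).mulVecLin.continuous_of_finiteDimensional).comp continuous_fst
    exact h1.add (continuous_snd.smul continuous_const)
  have key : ∀ n k, k + n = N → Convex ℝ (P.BRS k) ∧ IsCompact (P.BRS k) := by
    intro n
    induction n with
    | zero =>
      intro k hk
      have : k = N := by omega
      subst this
      rw [BRS_last]
      exact ⟨hXfconv, hXfcpt⟩
    | succ n ih =>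
      intro k hk
      have hkN : k < N := by omega
      obtain ⟨ihc, ihcpt⟩ := ih (k + 1) (by omega)
      set S : Set ((Fin d → ℝ) × ℝ) := {z |
        (∀ i, P.f k z.1 i ≤ 0) ∧ (∀ i, P.h k z.1 z.2 i ≤ 0) ∧
          P.step k z.1 z.2 ∈ P.BRS (k + 1)} with hS
      have hSconv : Convex ℝ S := by
        rintro z1 ⟨hf1, hh1, hs1⟩ z2 ⟨hf2, hh2, hs2⟩ a b ha hb hab
        have hstep : P.step k (a • z1 + b • z2).1 (a • z1 + b • z2).2 =
            a • P.step k z1.1 z1.2 + b • P.step k z2.1 z2.2 := by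
          show P.step k (a • z1.1 + b • z2.1) (a • z1.2 + b • z2.2) = _
          simp only [DiscreteOPP.step, Matrix.mulVec_add, Matrix.mulVec_smul, smul_eq_mul]
          module
        refine ⟨fun i => ?_, fun i => ?_, ?_⟩
        · have := (hf k i).2 (mem_univ z1.1) (mem_univ z2.1) ha hb hab
          simp only [smul_eq_mul] at this
          have h1 := mul_nonpos_of_nonneg_of_nonpos ha (hf1 i)
          have h2 := mul_nonpos_of_nonneg_of_nonpos hb (hf2 i)
          calc P.f k (a • z1 + b • z2).1 i = P.f k (a • z1.1 + b • z2.1) i := rfl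
            _ ≤ a * P.f k z1.1 i + b * P.f k z2.1 i := this
            _ ≤ 0 := by linarith
        · have := (hh k i).2 (mem_univ z1) (mem_univ z2) ha hb hab
          simp only [smul_eq_mul] at this
          have h1 := mul_nonpos_of_nonneg_of_nonpos ha (hh1 i)
          have h2 := mul_nonpos_of_nonneg_of_nonpos hb (hh2 i)
          calc P.h k (a • z1 + b • z2).1 (a • z1 + b • z2).2 i
              ≤ a * P.h k z1.1 z1.2 i + b * P.h k z2.1 z2.2 i := this
            _ ≤ 0 := by linarith
        · rw [hstep]
          exact ihc hs1 hs2 ha hb hab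
      have hSclosed : IsClosed S := by
        have h1 : IsClosed {z : (Fin d → ℝ) × ℝ | ∀ i, P.f k z.1 i ≤ 0} := by
          rw [setOf_forall]
          exact isClosed_iInter fun i =>
            isClosed_le ((hcontf k i).comp continuous_fst) continuous_const
        have h2 : IsClosed {z : (Fin d → ℝ) × ℝ | ∀ i, P.h k z.1 z.2 i ≤ 0} := by
          rw [setOf_forall]
          exact isClosed_iInter fun i => isClosed_le (hconth k i) continuous_const
        have h3 : IsClosed {z : (Fin d → ℝ) × ℝ | P.step k z.1 z.2 ∈ P.BRS (k + 1)} :=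
          ihcpt.isClosed.preimage (hcontstep k)
        exact (h1.inter (h2.inter h3))
      have hScpt : IsCompact S :=
        (hcpt k).of_isClosed_subset hSclosed fun z hz => ⟨hz.1, hz.2.1⟩
      rw [BRS_rec P k hkN, ← hS]
      constructor
      · rintro x1 ⟨z1, hz1, rfl⟩ x2 ⟨z2, hz2, rfl⟩ a b ha hb hab
        exact ⟨a • z1 + b • z2, hSconv hz1 hz2 ha hb hab, rfl⟩
      · exact hScpt.image continuous_fst
  intro k hk
  exact key (N - k) k (by omega)
end

section
/- In the discrete optimal path parameterization setup, suppose that for every k each component of f_k and of h_k is convex, X_f is convex and compact, and the set {(x,u) : f_k(x) ≤ 0, h_k(x,u) ≤ 0} is compact for each k. Then for every k < N and every x in the backward reachable set B_k, the admissible control set C_k(x) = {u ∈ ℝ : h_k(x,u) ≤ 0 and A_k x + b_k u ∈ B_{k+1}} is a nonempty convex compact subset of ℝ; in particular it is a closed bounded interval [a,b] with a ≤ b (a singleton when a = b). -/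
open Set

namespace DiscreteOPP

variable {N d : ℕ} (P : DiscreteOPP N d)

/-- The admissible control set `C_k(x)`. -/
def Ctrl (k : ℕ) (x : Fin d → ℝ) : Set ℝ :=
  {u | (∀ i, P.h k x u i ≤ 0) ∧ P.step k x u ∈ P.BRS (k + 1)}

end DiscreteOPP

/-- Cost of a trajectory from stage `k` on: `Σ_{j=k}^{N-1} L_j(x_j,u_j) + Φ(x_N)`. -/
def trajCost (N d : ℕ) (L : ℕ → (Fin d → ℝ) → ℝ → ℝ) (Φ : (Fin d → ℝ) → ℝ)
    (k : ℕ) (x : ℕ → Fin d → ℝ) (u : ℕ → ℝ) : ℝ :=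
  (∑ j ∈ Finset.Ico k N, L j (x j) (u j)) + Φ (x N)

namespace DiscreteOPP

variable {N d : ℕ} (P : DiscreteOPP N d)

lemma brs_N : P.BRS N = P.Xf := by
  ext x0
  constructor
  · rintro ⟨x, u, rfl, hfe⟩
    exact hfe.2
  · intro hx
    exact ⟨fun _ => x0, fun _ => 0, rfl, fun j hj hj' => absurd hj' (by omega), hx⟩

lemma brs_rec {k : ℕ} (hk : k < N) :
    P.BRS k = {x0 | (∀ i, P.f k x0 i ≤ 0) ∧
      ∃ u, (∀ i, P.h k x0 u i ≤ 0) ∧ P.step k x0 u ∈ P.BRS (k + 1)} := by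
  ext x0
  constructor
  · rintro ⟨x, u, rfl, hfe⟩
    obtain ⟨hstep, hfcon, hhcon⟩ := hfe.1 k le_rfl hk
    exact ⟨hfcon, u k, hhcon, x, u, hstep,
      ⟨fun j hj hj' => hfe.1 j (Nat.le_of_succ_le hj) hj', hfe.2⟩⟩
  · rintro ⟨hfcon, u0, hhcon, x', u', hx', hfe'⟩
    refine ⟨fun j => if j ≤ k then x0 else x' j, fun j => if j = k then u0 else u' j,
      by simp, ?_, ?_⟩
    · intro j hj hjN
      by_cases hjk : j = k
      · subst hjk
        have hkk : ¬ (j + 1 ≤ j) := by omega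
        simp only [le_refl, ite_true, eq_self_iff_true, hkk, ite_false, if_true, if_false]
        exact ⟨hx', hfcon, hhcon⟩
      · have h1 : ¬ j ≤ k := by omega
        have h2 : ¬ j + 1 ≤ k := by omega
        simp only [if_neg h1, if_neg h2, if_neg hjk]
        exact hfe'.1 j (by omega) hjN
    · have hNk : ¬ N ≤ k := by omega
      simpa only [if_neg hNk] using hfe'.2

/-- The map `z ↦ A_k z.1 + z.2 • b_k` is continuous. -/
lemma step_cont (k : ℕ) :
    Continuous fun z : (Fin d → ℝ) × ℝ => P.step k z.1 z.2 := by
  simp only [DiscreteOPP.step]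
  exact (((P.A k).mulVecLin.continuous_of_finiteDimensional).comp continuous_fst).add
    (continuous_snd.smul continuous_const)

lemma step_combo (k : ℕ) (a b : ℝ) (hab : a + b = 1) (x1 x2 : Fin d → ℝ) (v1 v2 : ℝ) :
    P.step k (a • x1 + b • x2) (a • v1 + b • v2)
      = a • P.step k x1 v1 + b • P.step k x2 v2 := by
  simp only [DiscreteOPP.step, Matrix.mulVec_add, Matrix.mulVec_smul, smul_add, smul_smul,
    add_smul, smul_eq_mul]
  abel

lemma brs_props
    (hf : ∀ k i, ConvexOn ℝ univ fun x => P.f k x i)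
    (hh : ∀ k i, ConvexOn ℝ univ fun z : (Fin d → ℝ) × ℝ => P.h k z.1 z.2 i)
    (hXfconv : Convex ℝ P.Xf) (hXfcpt : IsCompact P.Xf)
    (hcpt : ∀ k, IsCompact {z : (Fin d → ℝ) × ℝ |
      (∀ i, P.f k z.1 i ≤ 0) ∧ (∀ i, P.h k z.1 z.2 i ≤ 0)}) :
    ∀ n k, k + n = N → Convex ℝ (P.BRS k) ∧ IsCompact (P.BRS k) := by
  intro n
  induction n with
  | zero =>
    intro k hk
    have : k = N := by omega
    subst this
    rw [P.brs_N]
    exact ⟨hXfconv, hXfcpt⟩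
  | succ n ih =>
    intro k hk
    have hkN : k < N := by omega
    obtain ⟨IHconv, IHcpt⟩ := ih (k + 1) (by omega)
    set T : Set ((Fin d → ℝ) × ℝ) := {z | (∀ i, P.f k z.1 i ≤ 0) ∧
      (∀ i, P.h k z.1 z.2 i ≤ 0) ∧ P.step k z.1 z.2 ∈ P.BRS (k + 1)} with hT
    have himg : P.BRS k = Prod.fst '' T := by
      rw [P.brs_rec hkN]
      ext x0
      constructor
      · rintro ⟨hf0, u, hh0, hmem⟩
        exact ⟨(x0, u), ⟨hf0, hh0, hmem⟩, rfl⟩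
      · rintro ⟨z, ⟨hf0, hh0, hmem⟩, rfl⟩
        exact ⟨hf0, z.2, hh0, hmem⟩
    have hTconv : Convex ℝ T := by
      rintro z1 ⟨hfz1, hhz1, hsz1⟩ z2 ⟨hfz2, hhz2, hsz2⟩ a b ha hb hab
      refine ⟨?_, ?_, ?_⟩
      · intro i
        have := (hf k i).2 (mem_univ z1.1) (mem_univ z2.1) ha hb hab
        simp only [smul_eq_mul] at this
        have h1 := mul_le_mul_of_nonneg_left (hfz1 i) ha
        have h2 := mul_le_mul_of_nonneg_left (hfz2 i) hb
        show P.f k (a • z1.1 + b • z2.1) i ≤ 0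
        nlinarith [this]
      · intro i
        have := (hh k i).2 (mem_univ z1) (mem_univ z2) ha hb hab
        simp only [smul_eq_mul] at this
        have h1 := mul_le_mul_of_nonneg_left (hhz1 i) ha
        have h2 := mul_le_mul_of_nonneg_left (hhz2 i) hb
        show P.h k (a • z1 + b • z2).1 (a • z1 + b • z2).2 i ≤ 0
        nlinarith [this]
      · show P.step k (a • z1.1 + b • z2.1) (a • z1.2 + b • z2.2) ∈ P.BRS (k + 1)
        rw [P.step_combo k a b hab]
        exact IHconv hsz1 hsz2 ha hb hab
    have hTcpt : IsCompact T := by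
      have hTeq : T = {z : (Fin d → ℝ) × ℝ |
          (∀ i, P.f k z.1 i ≤ 0) ∧ (∀ i, P.h k z.1 z.2 i ≤ 0)} ∩
          ((fun z : (Fin d → ℝ) × ℝ => P.step k z.1 z.2) ⁻¹' P.BRS (k + 1)) := by
        ext z
        simp only [hT, Set.mem_inter_iff, Set.mem_setOf_eq, Set.mem_preimage]
        tauto
      refine IsCompact.of_isClosed_subset (hcpt k) ?_ ?_
      · rw [hTeq]
        exact ((hcpt k).isClosed).inter (IHcpt.isClosed.preimage (P.step_cont k))
      · rintro z ⟨h1, h2, _⟩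
        exact ⟨h1, h2⟩
    constructor
    · rw [himg]
      exact hTconv.linear_image (LinearMap.fst ℝ _ _)
    · rw [himg]
      exact hTcpt.image continuous_fst

end DiscreteOPP

/-- under convexity of the constraint components, convexity and compactness of
`Xf`, and compactness of the stagewise constraint sets, for every `k < N` and every state
`x` in the backward reachable set `B_k`, the admissible control set `C_k(x)` is a nonempty
convex compact subset of `ℝ`; in particular it is a closed bounded interval `[a, c]` with
`a ≤ c` (a singleton when `a = c`). -/
theorem statement_3 {N d : ℕ} (hN : 1 ≤ N) (hd : 1 ≤ d) (P : DiscreteOPP N d)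
    (hf : ∀ k i, ConvexOn ℝ univ fun x => P.f k x i)
    (hh : ∀ k i, ConvexOn ℝ univ fun z : (Fin d → ℝ) × ℝ => P.h k z.1 z.2 i)
    (hXfconv : Convex ℝ P.Xf) (hXfcpt : IsCompact P.Xf)
    (hcpt : ∀ k, IsCompact {z : (Fin d → ℝ) × ℝ |
      (∀ i, P.f k z.1 i ≤ 0) ∧ (∀ i, P.h k z.1 z.2 i ≤ 0)}) :
    ∀ k < N, ∀ x ∈ P.BRS k,
      (P.Ctrl k x).Nonempty ∧ Convex ℝ (P.Ctrl k x) ∧ IsCompact (P.Ctrl k x) ∧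
        ∃ a c : ℝ, a ≤ c ∧ P.Ctrl k x = Icc a c := by
  intro k hkN x hx
  obtain ⟨hBconv, hBcpt⟩ := P.brs_props hf hh hXfconv hXfcpt hcpt (N - (k + 1)) (k + 1)
    (by omega)
  rw [P.brs_rec hkN] at hx
  obtain ⟨hf0, u0, hh0, hmem0⟩ := hx
  have hne : (P.Ctrl k x).Nonempty := ⟨u0, hh0, hmem0⟩
  have hconv : Convex ℝ (P.Ctrl k x) := by
    rintro u1 ⟨hhu1, hsu1⟩ u2 ⟨hhu2, hsu2⟩ a b ha hb hab
    have hxcombo : a • x + b • x = x := by rw [← add_smul, hab, one_smul]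
    constructor
    · intro i
      have := (hh k i).2 (mem_univ (x, u1)) (mem_univ (x, u2)) ha hb hab
      simp only [smul_eq_mul] at this
      have hfst : (a • (x, u1) + b • (x, u2)).1 = x := hxcombo
      have hsnd : (a • (x, u1) + b • (x, u2)).2 = a • u1 + b • u2 := rfl
      rw [hfst, hsnd] at this
      have h1 := mul_le_mul_of_nonneg_left (hhu1 i) ha
      have h2 := mul_le_mul_of_nonneg_left (hhu2 i) hb
      simp only [smul_eq_mul] at this ⊢
      nlinarith [this]
    · have : P.step k x (a • u1 + b • u2) = a • P.step k x u1 + b • P.step k x u2 := by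
        conv_lhs => rw [← hxcombo]
        exact P.step_combo k a b hab x x u1 u2
      simp only [smul_eq_mul] at this ⊢
      rw [this]
      exact hBconv hsu1 hsu2 ha hb hab
  have hhcont : ∀ i, Continuous fun u : ℝ => P.h k x u i := by
    intro i
    have hc : Continuous fun z : (Fin d → ℝ) × ℝ => P.h k z.1 z.2 i :=
      continuousOn_univ.mp ((hh k i).continuousOn isOpen_univ)
    exact hc.comp (continuous_const.prodMk continuous_id)
  have hclosed : IsClosed (P.Ctrl k x) := by
    have h1 : IsClosed {u : ℝ | ∀ i, P.h k x u i ≤ 0} := by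
      have : {u : ℝ | ∀ i, P.h k x u i ≤ 0} = ⋂ i, {u : ℝ | P.h k x u i ≤ 0} := by
        ext u; simp
      rw [this]
      exact isClosed_iInter fun i => isClosed_le (hhcont i) continuous_const
    have h2 : IsClosed ((fun u : ℝ => P.step k x u) ⁻¹' P.BRS (k + 1)) := by
      refine hBcpt.isClosed.preimage ?_
      exact (P.step_cont k).comp (continuous_const.prodMk continuous_id)
    exact h1.inter h2
  have hcptC : IsCompact (P.Ctrl k x) := by
    refine IsCompact.of_isClosed_subset ((hcpt k).image continuous_snd) hclosed ?_
    rintro u ⟨hhu, -⟩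
    exact ⟨(x, u), ⟨hf0, hhu⟩, rfl⟩
  refine ⟨hne, hconv, hcptC, sInf (P.Ctrl k x), sSup (P.Ctrl k x), ?_, ?_⟩
  · have := eq_Icc_of_connected_compact ⟨hne, hconv.isPreconnected⟩ hcptC
    rw [this] at hne
    exact nonempty_Icc.mp hne
  · exact eq_Icc_of_connected_compact ⟨hne, hconv.isPreconnected⟩ hcptC
end

section
/- Let B ⊆ ℝ^d be a nonempty convex set, and let a, b : B → ℝ with a convex, b concave, a(y) ≤ b(y) for all y ∈ B, and a and b locally Lipschitz on B. Let W = {(y,u) ∈ ℝ^d × ℝ : y ∈ B, a(y) ≤ u ≤ b(y)} and let J : W → ℝ be convex and locally Lipschitz on W. Define V(y) = inf_{a(y) ≤ u ≤ b(y)} J(y,u) for y ∈ B (the infimum over a nonempty compact interval, hence attained when J is continuous). Then V is convex on B and locally Lipschitz on B: for every y0 ∈ B there exist ε > 0 and C > 0 such that |V(y1) − V(y2)| ≤ C‖y1 − y2‖ for all y1, y2 ∈ B within distance ε of y0. -/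
open Set

set_option maxHeartbeats 1600000 in
/-- core of Proposition 1: let `B ⊆ ℝ^d` be nonempty convex, `a` convex and
`b` concave on `B` with `a ≤ b`, both locally Lipschitz on `B`.  Let
`W = {(y,u) : y ∈ B, a y ≤ u ≤ b y}` and let `J` be convex and locally Lipschitz on `W`.
Define `V y = inf_{a y ≤ u ≤ b y} J (y,u)`.  Then `V` is convex on `B` and locally
Lipschitz on `B`. -/
theorem statement_9 {d : ℕ}
    (B : Set (EuclideanSpace ℝ (Fin d))) (hBne : B.Nonempty) (hBconv : Convex ℝ B)
    (a b : EuclideanSpace ℝ (Fin d) → ℝ)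
    (ha : ConvexOn ℝ B a) (hb : ConcaveOn ℝ B b) (hab : ∀ y ∈ B, a y ≤ b y)
    (haLip : ∀ y0 ∈ B, ∃ ε > (0 : ℝ), ∃ C > (0 : ℝ), ∀ y1 ∈ B, ∀ y2 ∈ B,
      ‖y1 - y0‖ ≤ ε → ‖y2 - y0‖ ≤ ε → |a y1 - a y2| ≤ C * ‖y1 - y2‖)
    (hbLip : ∀ y0 ∈ B, ∃ ε > (0 : ℝ), ∃ C > (0 : ℝ), ∀ y1 ∈ B, ∀ y2 ∈ B,
      ‖y1 - y0‖ ≤ ε → ‖y2 - y0‖ ≤ ε → |b y1 - b y2| ≤ C * ‖y1 - y2‖)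
    (W : Set (EuclideanSpace ℝ (Fin d) × ℝ))
    (hW : W = {z | z.1 ∈ B ∧ a z.1 ≤ z.2 ∧ z.2 ≤ b z.1})
    (J : EuclideanSpace ℝ (Fin d) × ℝ → ℝ)
    (hJconv : ConvexOn ℝ W J)
    (hJLip : ∀ z0 ∈ W, ∃ ε > (0 : ℝ), ∃ C > (0 : ℝ), ∀ z1 ∈ W, ∀ z2 ∈ W,
      ‖z1 - z0‖ ≤ ε → ‖z2 - z0‖ ≤ ε → |J z1 - J z2| ≤ C * ‖z1 - z2‖)
    (V : EuclideanSpace ℝ (Fin d) → ℝ)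
    (hV : ∀ y ∈ B, V y = sInf ((fun u => J (y, u)) '' Icc (a y) (b y))) :
    ConvexOn ℝ B V ∧
      ∀ y0 ∈ B, ∃ ε > (0 : ℝ), ∃ C > (0 : ℝ), ∀ y1 ∈ B, ∀ y2 ∈ B,
        ‖y1 - y0‖ ≤ ε → ‖y2 - y0‖ ≤ ε → |V y1 - V y2| ≤ C * ‖y1 - y2‖ := by
  classical
  have hmemW : ∀ (y : EuclideanSpace ℝ (Fin d)) (u : ℝ), y ∈ B → u ∈ Icc (a y) (b y) →
      ((y, u) : EuclideanSpace ℝ (Fin d) × ℝ) ∈ W := by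
    intro y u hy hu
    rw [hW]
    exact ⟨hy, hu.1, hu.2⟩
  -- norm of a pair difference
  have pnorm : ∀ (p q : EuclideanSpace ℝ (Fin d) × ℝ),
      ‖p - q‖ = max ‖p.1 - q.1‖ |p.2 - q.2| := by
    intro p q
    rw [Prod.norm_def]
    rfl
  have tri : ∀ (p q r : EuclideanSpace ℝ (Fin d) × ℝ), ‖p - r‖ ≤ ‖p - q‖ + ‖q - r‖ := by
    intro p q r
    simpa [dist_eq_norm] using dist_triangle p q r
  -- clamping lemma
  have clamp : ∀ lo hi lo' hi' u : ℝ, lo ≤ hi → lo' ≤ u → u ≤ hi' →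
      max lo (min u hi) ∈ Icc lo hi ∧ |max lo (min u hi) - u| ≤ |lo - lo'| + |hi - hi'| := by
    intro lo hi lo' hi' u hlh hl hh
    refine ⟨⟨le_max_left _ _, max_le hlh (min_le_right _ _)⟩, ?_⟩
    rcases le_total u lo with h1 | h1
    · rw [min_eq_left (h1.trans hlh), max_eq_left h1]
      rw [abs_of_nonneg (by linarith)]
      have h2 := le_abs_self (lo - lo')
      have h3 := abs_nonneg (hi - hi')
      linarith
    · rcases le_total hi u with h2 | h2
      · rw [min_eq_right h2, max_eq_right hlh]
        rw [abs_sub_comm, abs_of_nonneg (by linarith)]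
        have h3 := neg_le_abs (hi - hi')
        have h4 := abs_nonneg (lo - lo')
        linarith
      · rw [min_eq_left h2, max_eq_right h1]
        simp only [sub_self, abs_zero]
        positivity
  -- the minimum in the definition of V is attained
  have hfiber : ∀ y ∈ B, ∃ u ∈ Icc (a y) (b y),
      V y = J (y, u) ∧ ∀ v ∈ Icc (a y) (b y), J (y, u) ≤ J (y, v) := by
    intro y hy
    have hne : (Icc (a y) (b y)).Nonempty := nonempty_Icc.2 (hab y hy)
    have hcont : ContinuousOn (fun u => J (y, u)) (Icc (a y) (b y)) := by
      intro u0 hu0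
      obtain ⟨ε, hε, C, hC, hP⟩ := hJLip (y, u0) (hmemW y u0 hy hu0)
      rw [Metric.continuousWithinAt_iff]
      intro δ hδ
      refine ⟨min ε (δ / (C + 1)), by positivity, fun u hu hd => ?_⟩
      have hnormu : ∀ v : ℝ, ‖((y, v) : EuclideanSpace ℝ (Fin d) × ℝ) - (y, u0)‖ = |v - u0| := by
        intro v
        rw [pnorm]
        simp
      have hdu : |u - u0| < min ε (δ / (C + 1)) := by rwa [Real.dist_eq] at hd
      have h1 := hP (y, u) (hmemW y u hy hu) (y, u0) (hmemW y u0 hy hu0)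
        (by rw [hnormu]; exact (hdu.trans_le (min_le_left _ _)).le)
        (by rw [hnormu]; simp [hε.le])
      rw [hnormu] at h1
      rw [Real.dist_eq]
      have hC1 : (0 : ℝ) < C + 1 := by linarith
      have h3 : C * |u - u0| < C * (δ / (C + 1)) :=
        mul_lt_mul_of_pos_left (hdu.trans_le (min_le_right _ _)) hC
      have h4 : C * (δ / (C + 1)) < δ := by
        have he : C * (δ / (C + 1)) = C * δ / (C + 1) := by ring
        rw [he, div_lt_iff₀ hC1]
        nlinarith
      have h5 := le_abs_self (J (y, u) - J (y, u0))
      have h6 := neg_le_abs (J (y, u) - J (y, u0))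
      have habsd : |J (y, u) - J (y, u0)| ≤ C * |u - u0| := h1
      rw [abs_lt]
      constructor <;> nlinarith
    obtain ⟨u, hu, hmin⟩ := isCompact_Icc.exists_isMinOn hne hcont
    have hmin' : ∀ v ∈ Icc (a y) (b y), J (y, u) ≤ J (y, v) := fun v hv =>
      isMinOn_iff.mp hmin v hv
    refine ⟨u, hu, ?_, hmin'⟩
    have hle : IsLeast ((fun u => J (y, u)) '' Icc (a y) (b y)) (J (y, u)) := by
      refine ⟨⟨u, hu, rfl⟩, ?_⟩
      rintro x ⟨v, hv, rfl⟩
      exact hmin' v hv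
    rw [hV y hy, hle.csInf_eq]
  -- convexity of V
  have hVconv : ConvexOn ℝ B V := by
    refine ⟨hBconv, fun y1 hy1 y2 hy2 s t hs ht hst => ?_⟩
    obtain ⟨u1, hu1, hVu1, hmin1⟩ := hfiber y1 hy1
    obtain ⟨u2, hu2, hVu2, hmin2⟩ := hfiber y2 hy2
    have hymem : s • y1 + t • y2 ∈ B := hBconv hy1 hy2 hs ht hst
    have h1 : a (s • y1 + t • y2) ≤ s * a y1 + t * a y2 := by
      simpa [smul_eq_mul] using ha.2 hy1 hy2 hs ht hst
    have h2 : s * b y1 + t * b y2 ≤ b (s • y1 + t • y2) := by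
      simpa [smul_eq_mul] using hb.2 hy1 hy2 hs ht hst
    have hau : a (s • y1 + t • y2) ≤ s * u1 + t * u2 := by
      have := add_le_add (mul_le_mul_of_nonneg_left hu1.1 hs)
        (mul_le_mul_of_nonneg_left hu2.1 ht)
      linarith
    have hbu : s * u1 + t * u2 ≤ b (s • y1 + t • y2) := by
      have := add_le_add (mul_le_mul_of_nonneg_left hu1.2 hs)
        (mul_le_mul_of_nonneg_left hu2.2 ht)
      linarith
    have hz : ((s • y1 + t • y2, s * u1 + t * u2) : EuclideanSpace ℝ (Fin d) × ℝ)
        = s • ((y1, u1) : EuclideanSpace ℝ (Fin d) × ℝ) + t • (y2, u2) := by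
      simp [Prod.ext_iff, Prod.smul_mk, smul_eq_mul]
    have hJ := hJconv.2 (hmemW y1 u1 hy1 hu1) (hmemW y2 u2 hy2 hu2) hs ht hst
    rw [← hz] at hJ
    obtain ⟨u', hu', hVu', hmin'⟩ := hfiber (s • y1 + t • y2) hymem
    have hVy : V (s • y1 + t • y2) ≤ J (s • y1 + t • y2, s * u1 + t * u2) := by
      rw [hVu']
      exact hmin' _ ⟨hau, hbu⟩
    simp only [smul_eq_mul] at hJ ⊢
    rw [hVu1, hVu2]
    linarith
  refine ⟨hVconv, fun y0 hy0 => ?_⟩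
  -- local Lipschitz data for a and b at y0
  obtain ⟨εa, hεa, Ca, hCa, hPa⟩ := haLip y0 hy0
  obtain ⟨εb, hεb, Cb, hCb, hPb⟩ := hbLip y0 hy0
  choose! eps heps Cf hCf hPf using hJLip
  -- compact fiber over y0
  set K : Set (EuclideanSpace ℝ (Fin d) × ℝ) :=
    (fun u => ((y0 : EuclideanSpace ℝ (Fin d)), u)) '' Icc (a y0) (b y0) with hKdef
  have hKsub : K ⊆ W := by
    rintro z ⟨u, hu, rfl⟩
    exact hmemW y0 u hy0 hu
  have hKcomp : IsCompact K := isCompact_Icc.image (Continuous.prodMk_right y0)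
  obtain ⟨t, htK, htcov⟩ := hKcomp.elim_nhds_subcover (fun z => Metric.ball z (eps z / 3))
    (fun z hz => Metric.ball_mem_nhds z (by have := heps z (hKsub hz); positivity))
  have hKne : K.Nonempty := ⟨(y0, a y0), a y0, ⟨le_refl _, hab y0 hy0⟩, rfl⟩
  have htne : t.Nonempty := by
    obtain ⟨k, hk⟩ := hKne
    have hk2 := htcov hk
    simp only [mem_iUnion] at hk2
    obtain ⟨z, hz, -⟩ := hk2
    exact ⟨z, hz⟩
  set ε3 : ℝ := t.inf' htne (fun z => eps z / 3) with hε3def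
  have hε3pos : 0 < ε3 := by
    rw [hε3def, Finset.lt_inf'_iff]
    intro z hz
    have := heps z (hKsub (htK z hz))
    positivity
  have hε3le : ∀ z ∈ t, ε3 ≤ eps z / 3 := fun z hz => Finset.inf'_le _ hz
  set Cmax : ℝ := t.sup' htne Cf with hCmaxdef
  have hCmaxpos : 0 < Cmax := by
    obtain ⟨z, hz⟩ := htne
    exact lt_of_lt_of_le (hCf z (hKsub (htK z hz))) (Finset.le_sup' _ hz)
  have hCmaxle : ∀ z ∈ t, Cf z ≤ Cmax := fun z hz => Finset.le_sup' _ hz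
  set L : ℝ := 1 + Ca + Cb with hLdef
  have hLpos : 0 < L := by positivity
  set ε : ℝ := min εa (min εb (ε3 / (2 * L))) with hεdef
  have hεpos : 0 < ε := by positivity
  have hεle_a : ε ≤ εa := min_le_left _ _
  have hεle_b : ε ≤ εb := (min_le_right _ _).trans (min_le_left _ _)
  have hεle_3 : ε ≤ ε3 / (2 * L) := (min_le_right _ _).trans (min_le_right _ _)
  clear_value ε3 Cmax L ε
  refine ⟨ε, hεpos, Cmax * L, by positivity, ?_⟩
  -- one-sided estimate
  have main : ∀ y1 ∈ B, ∀ y2 ∈ B, ‖y1 - y0‖ ≤ ε → ‖y2 - y0‖ ≤ ε →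
      V y1 - V y2 ≤ Cmax * L * ‖y1 - y2‖ := by
    intro y1 hy1 y2 hy2 h1 h2
    obtain ⟨u2, hu2, hVu2, hmin2⟩ := hfiber y2 hy2
    have h1a : ‖y1 - y0‖ ≤ εa := h1.trans hεle_a
    have h2a : ‖y2 - y0‖ ≤ εa := h2.trans hεle_a
    have h1b : ‖y1 - y0‖ ≤ εb := h1.trans hεle_b
    have h2b : ‖y2 - y0‖ ≤ εb := h2.trans hεle_b
    have h0a : ‖y0 - y0‖ ≤ εa := by simp [hεa.le]
    have h0b : ‖y0 - y0‖ ≤ εb := by simp [hεb.le]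
    have hda : |a y1 - a y2| ≤ Ca * ‖y1 - y2‖ := hPa y1 hy1 y2 hy2 h1a h2a
    have hdb : |b y1 - b y2| ≤ Cb * ‖y1 - y2‖ := hPb y1 hy1 y2 hy2 h1b h2b
    have hda0 : |a y0 - a y2| ≤ Ca * ‖y0 - y2‖ := hPa y0 hy0 y2 hy2 h0a h2a
    have hdb0 : |b y0 - b y2| ≤ Cb * ‖y0 - y2‖ := hPb y0 hy0 y2 hy2 h0b h2b
    have hny02 : ‖y0 - y2‖ ≤ ε := by rw [norm_sub_rev]; exact h2
    have hny12 : ‖y1 - y2‖ ≤ 2 * ε := by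
      have := tri (y1, (0:ℝ)) (y0, 0) (y2, 0)
      have hh : ‖y1 - y2‖ ≤ ‖y1 - y0‖ + ‖y0 - y2‖ := by
        have := norm_sub_le_norm_sub_add_norm_sub y1 y0 y2
        exact this
      linarith
    -- clamp u2 into the interval for y1
    set u1 : ℝ := max (a y1) (min u2 (b y1)) with hu1def
    obtain ⟨hu1mem, hu1d⟩ := clamp (a y1) (b y1) (a y2) (b y2) u2 (hab y1 hy1) hu2.1 hu2.2
    have hu1d' : |u1 - u2| ≤ (Ca + Cb) * ‖y1 - y2‖ := by
      calc |u1 - u2| ≤ |a y1 - a y2| + |b y1 - b y2| := hu1d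
        _ ≤ Ca * ‖y1 - y2‖ + Cb * ‖y1 - y2‖ := add_le_add hda hdb
        _ = (Ca + Cb) * ‖y1 - y2‖ := by ring
    -- clamp u2 into the interval for y0 (projection onto the fiber K)
    set ustar : ℝ := max (a y0) (min u2 (b y0)) with hustardef
    obtain ⟨hustarmem, hustard⟩ := clamp (a y0) (b y0) (a y2) (b y2) u2 (hab y0 hy0) hu2.1 hu2.2
    have hustard' : |ustar - u2| ≤ (Ca + Cb) * ε := by
      have : |a y0 - a y2| + |b y0 - b y2| ≤ Ca * ‖y0 - y2‖ + Cb * ‖y0 - y2‖ :=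
        add_le_add hda0 hdb0
      have h4 : Ca * ‖y0 - y2‖ ≤ Ca * ε := mul_le_mul_of_nonneg_left hny02 hCa.le
      have h5 : Cb * ‖y0 - y2‖ ≤ Cb * ε := mul_le_mul_of_nonneg_left hny02 hCb.le
      calc |ustar - u2| ≤ |a y0 - a y2| + |b y0 - b y2| := hustard
        _ ≤ (Ca + Cb) * ε := by linarith
    -- the points
    have hz1W : ((y1, u1) : EuclideanSpace ℝ (Fin d) × ℝ) ∈ W := hmemW y1 u1 hy1 hu1mem
    have hz2W : ((y2, u2) : EuclideanSpace ℝ (Fin d) × ℝ) ∈ W := hmemW y2 u2 hy2 hu2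
    have hynn : (0:ℝ) ≤ ‖y1 - y2‖ := norm_nonneg _
    -- norms
    have hn12 : ‖((y1, u1) : EuclideanSpace ℝ (Fin d) × ℝ) - (y2, u2)‖ ≤ L * ‖y1 - y2‖ := by
      rw [pnorm]
      refine max_le ?_ ?_
      · show ‖y1 - y2‖ ≤ L * ‖y1 - y2‖
        have hL1 : (1:ℝ) ≤ L := by rw [hLdef]; linarith
        calc ‖y1 - y2‖ = 1 * ‖y1 - y2‖ := (one_mul _).symm
          _ ≤ L * ‖y1 - y2‖ := mul_le_mul_of_nonneg_right hL1 hynn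
      · show |u1 - u2| ≤ L * ‖y1 - y2‖
        have hL2 : Ca + Cb ≤ L := by rw [hLdef]; linarith
        calc |u1 - u2| ≤ (Ca + Cb) * ‖y1 - y2‖ := hu1d'
          _ ≤ L * ‖y1 - y2‖ := mul_le_mul_of_nonneg_right hL2 hynn
    have hn2s : ‖((y2, u2) : EuclideanSpace ℝ (Fin d) × ℝ) - (y0, ustar)‖ ≤ L * ε := by
      rw [pnorm]
      refine max_le ?_ ?_
      · show ‖y2 - y0‖ ≤ L * ε
        have hL1 : (1:ℝ) ≤ L := by rw [hLdef]; linarith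
        calc ‖y2 - y0‖ ≤ ε := h2
          _ = 1 * ε := (one_mul _).symm
          _ ≤ L * ε := mul_le_mul_of_nonneg_right hL1 hεpos.le
      · show |u2 - ustar| ≤ L * ε
        have hL2 : Ca + Cb ≤ L := by rw [hLdef]; linarith
        rw [abs_sub_comm]
        calc |ustar - u2| ≤ (Ca + Cb) * ε := hustard'
          _ ≤ L * ε := mul_le_mul_of_nonneg_right hL2 hεpos.le
    -- covering ball
    have hKstar : ((y0, ustar) : EuclideanSpace ℝ (Fin d) × ℝ) ∈ K := ⟨ustar, hustarmem, rfl⟩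
    have hk2 := htcov hKstar
    simp only [mem_iUnion, Metric.mem_ball] at hk2
    obtain ⟨zi, hzi, hdzi⟩ := hk2
    have hziW : zi ∈ W := hKsub (htK zi hzi)
    have hdzi' : ‖((y0, ustar) : EuclideanSpace ℝ (Fin d) × ℝ) - zi‖ < eps zi / 3 := by
      rwa [dist_eq_norm] at hdzi
    have hεi3 : ε3 ≤ eps zi / 3 := hε3le zi hzi
    have hepsi : 0 < eps zi := heps zi hziW
    have hLε : L * ε ≤ ε3 / 2 := by
      have h9 := mul_le_mul_of_nonneg_left hεle_3 hLpos.le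
      calc L * ε ≤ L * (ε3 / (2 * L)) := h9
        _ = ε3 / 2 := by field_simp
    have hn2i : ‖((y2, u2) : EuclideanSpace ℝ (Fin d) × ℝ) - zi‖ ≤ eps zi / 2 := by
      have h9 := tri (y2, u2) (y0, ustar) zi
      have ha1 : ‖((y2, u2) : EuclideanSpace ℝ (Fin d) × ℝ) - (y0, ustar)‖ + ‖((y0, ustar) : EuclideanSpace ℝ (Fin d) × ℝ) - zi‖ ≤ L * ε + eps zi / 3 := add_le_add hn2s hdzi'.le
      have ha2 : L * ε + eps zi / 3 ≤ ε3 / 2 + eps zi / 3 := by linarith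
      have ha3 : ε3 / 2 + eps zi / 3 ≤ eps zi / 2 := by linarith
      linarith
    have hn1i : ‖((y1, u1) : EuclideanSpace ℝ (Fin d) × ℝ) - zi‖ ≤ eps zi := by
      have h6 := tri (y1, u1) (y2, u2) zi
      have h7 : ‖((y1, u1) : EuclideanSpace ℝ (Fin d) × ℝ) - (y2, u2)‖ ≤ 2 * (L * ε) := by
        have h9 := mul_le_mul_of_nonneg_left hny12 hLpos.le
        have h10 : L * ‖y1 - y2‖ ≤ L * (2 * ε) := h9
        have h11 : L * (2 * ε) = 2 * (L * ε) := by ring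
        linarith
      have hb1 : ‖((y1, u1) : EuclideanSpace ℝ (Fin d) × ℝ) - (y2, u2)‖ + ‖((y2, u2) : EuclideanSpace ℝ (Fin d) × ℝ) - zi‖ ≤ 2 * (L * ε) + eps zi / 2 := add_le_add h7 hn2i
      have hb2 : 2 * (L * ε) ≤ ε3 := by linarith [hLε]
      have hb3 : ε3 ≤ eps zi / 3 := hεi3
      linarith [hb1, hb2, hb3, hepsi, h6]
    -- uniform Lipschitz bound for J
    have hJbound : |J (y1, u1) - J (y2, u2)| ≤ Cf zi * ‖((y1, u1) : EuclideanSpace ℝ (Fin d) × ℝ) - (y2, u2)‖ :=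
      hPf zi hziW (y1, u1) hz1W (y2, u2) hz2W hn1i (hn2i.trans (by linarith))
    have hJbound' : |J (y1, u1) - J (y2, u2)| ≤ Cmax * (L * ‖y1 - y2‖) := by
      have h10 := hCmaxle zi hzi
      have h11 := norm_nonneg (((y1, u1) : EuclideanSpace ℝ (Fin d) × ℝ) - (y2, u2))
      have h12 : Cf zi * ‖((y1, u1) : EuclideanSpace ℝ (Fin d) × ℝ) - (y2, u2)‖ ≤ Cmax * ‖((y1, u1) : EuclideanSpace ℝ (Fin d) × ℝ) - (y2, u2)‖ := mul_le_mul_of_nonneg_right h10 h11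
      have h13 := mul_le_mul_of_nonneg_left hn12 hCmaxpos.le
      linarith
    -- conclude
    obtain ⟨u1', hu1', hVu1', hmin1'⟩ := hfiber y1 hy1
    have hV1 : V y1 ≤ J (y1, u1) := by
      rw [hVu1']
      exact hmin1' u1 hu1mem
    have h8 := le_abs_self (J (y1, u1) - J (y2, u2))
    have h14 : V y1 - V y2 ≤ J (y1, u1) - J (y2, u2) := by rw [hVu2]; linarith
    calc V y1 - V y2 ≤ J (y1, u1) - J (y2, u2) := h14
      _ ≤ Cmax * L * ‖y1 - y2‖ := by rw [mul_assoc]; linarith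
  intro y1 hy1 y2 hy2 h1 h2
  rw [abs_sub_le_iff]
  constructor
  · exact main y1 hy1 y2 hy2 h1 h2
  · have := main y2 hy2 y1 hy1 h2 h1
    rwa [norm_sub_rev y2 y1] at this
end

section
/- In the discrete optimal path parameterization setup, let functions V_k^p : B_k → ℝ satisfy V_N^p = Φ on X_f, and for k < N define the one-step approximation Ṽ_k^p(x) = inf_{u ∈ C_k(x)} [ L_k(x,u) + V_{k+1}^p(A_k x + b_k u) ] for x ∈ B_k, assuming each such infimum is finite. Suppose V_k^p(x) ≤ Ṽ_k^p(x) for all x ∈ B_k and all k < N. Then for every k and every x ∈ B_k: V_k^p(x) ≤ Ṽ_k^p(x) ≤ V_k*(x), and moreover for every feasible continuation (x_j, u_j)_{j ≥ k} starting at x_k = x one has V_k*(x) ≤ Σ_{j=k}^{N−1} L_j(x_j, u_j) + Φ(x_N). -/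
open Set

/-- Proposition 2: lower-bound property of cut-based approximations: suppose
`V^p_N = Φ` on `X_f`, the one-step approximation `Ṽ^p_k(x)` is the (finite) infimum of
`L_k(x,u) + V^p_{k+1}(A_k x + b_k u)` over `u ∈ C_k(x)` (expressed via `IsGLB`), and
`V^p_k ≤ Ṽ^p_k` on `B_k`.  With `Vstar k x` the (finite) infimum of the cost over feasible
continuations from `x` (again via `IsGLB`), for every `k < N` and `x ∈ B_k` one has
`V^p_k(x) ≤ Ṽ^p_k(x) ≤ V_k*(x)`, and `V_k*(x)` is a lower bound on the cost of every
feasible continuation starting at `x`. -/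
theorem statement_10 {N d : ℕ} (hN : 1 ≤ N) (P : DiscreteOPP N d)
    (L : ℕ → (Fin d → ℝ) → ℝ → ℝ) (Φ : (Fin d → ℝ) → ℝ)
    (Vp Vtil Vstar : ℕ → (Fin d → ℝ) → ℝ)
    (hVpN : ∀ x ∈ P.Xf, Vp N x = Φ x)
    (hVtil : ∀ k < N, ∀ x ∈ P.BRS k,
      IsGLB {c | ∃ u ∈ P.Ctrl k x, c = L k x u + Vp (k + 1) (P.step k x u)} (Vtil k x))
    (hle : ∀ k < N, ∀ x ∈ P.BRS k, Vp k x ≤ Vtil k x)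
    (hVstar : ∀ k ≤ N, ∀ x ∈ P.BRS k,
      IsGLB {c | ∃ xs us, xs k = x ∧ P.FeasFrom k xs us ∧ c = trajCost N d L Φ k xs us}
        (Vstar k x)) :
    ∀ k < N, ∀ x ∈ P.BRS k,
      (Vp k x ≤ Vtil k x ∧ Vtil k x ≤ Vstar k x) ∧
        ∀ xs us, xs k = x → P.FeasFrom k xs us →
          Vstar k x ≤ trajCost N d L Φ k xs us := by
    -- Key lemma: Vtil k (xs k) is a lower bound on the cost of any feasible continuation.
  have key : ∀ n k, k < N → N - k ≤ n → ∀ xs us, P.FeasFrom k xs us →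
      Vtil k (xs k) ≤ trajCost N d L Φ k xs us := by
    intro n
    induction n with
    | zero => intro k hk hnk; omega
    | succ n ih =>
      intro k hk hnk xs us hfeas
      have hdyn := (hfeas.1 k le_rfl hk)
      have hxB : xs k ∈ P.BRS k := ⟨xs, us, rfl, hfeas⟩
      have hfeas' : P.FeasFrom (k + 1) xs us :=
        ⟨fun j hj1 hj2 => hfeas.1 j (by omega) hj2, hfeas.2⟩
      have hstep : P.step k (xs k) (us k) = xs (k + 1) := hdyn.1.symm
      have hctrl : us k ∈ P.Ctrl k (xs k) := by
        refine ⟨hdyn.2.2, ?_⟩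
        rw [hstep]
        exact ⟨xs, us, rfl, hfeas'⟩
      have hmem : L k (xs k) (us k) + Vp (k + 1) (P.step k (xs k) (us k)) ∈
          {c | ∃ u ∈ P.Ctrl k (xs k), c = L k (xs k) u + Vp (k + 1) (P.step k (xs k) u)} :=
        ⟨us k, hctrl, rfl⟩
      have h1 : Vtil k (xs k) ≤ L k (xs k) (us k) + Vp (k + 1) (xs (k + 1)) := by
        have := (hVtil k hk (xs k) hxB).1 hmem
        rwa [hstep] at this
      have hsplit : trajCost N d L Φ k xs us
          = L k (xs k) (us k) + trajCost N d L Φ (k + 1) xs us := by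
        unfold trajCost
        rw [Finset.sum_eq_sum_Ico_succ_bot hk]
        ring
      rw [hsplit]
      rcases lt_or_eq_of_le (Nat.succ_le_of_lt hk) with hk1 | hk1
      · -- k + 1 < N : use induction hypothesis and hle
        have hx1B : xs (k + 1) ∈ P.BRS (k + 1) := ⟨xs, us, rfl, hfeas'⟩
        have h2 : Vp (k + 1) (xs (k + 1)) ≤ trajCost N d L Φ (k + 1) xs us :=
          le_trans (hle (k + 1) hk1 _ hx1B) (ih (k + 1) hk1 (by omega) xs us hfeas')
        linarith
      · -- k + 1 = N : terminal case
        have hxN : xs N ∈ P.Xf := hfeas.2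
        have h2 : Vp (k + 1) (xs (k + 1)) = trajCost N d L Φ (k + 1) xs us := by
          rw [show k + 1 = N from hk1]
          unfold trajCost
          rw [Finset.Ico_self, Finset.sum_empty, zero_add]
          exact hVpN _ hxN
        linarith
  intro k hk x hxB
  have hVs := hVstar k (le_of_lt hk) x hxB
  have hlb : ∀ xs us, xs k = x → P.FeasFrom k xs us →
      Vstar k x ≤ trajCost N d L Φ k xs us := by
    intro xs us hx hfeas
    exact hVs.1 ⟨xs, us, hx, hfeas, rfl⟩
  refine ⟨⟨hle k hk x hxB, ?_⟩, hlb⟩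
  apply hVs.2
  rintro c ⟨xs, us, hx, hfeas, rfl⟩
  have := key (N - k) k hk le_rfl xs us hfeas
  rwa [hx] at this
end

section
/- Let Ω ⊆ ℝ^n be a nonempty convex set, let the objective J = J₁ − J₂ on Ω with J₁, J₂ : Ω → ℝ convex and J₂ differentiable, and let constraints g_i = g_{i,1} − g_{i,2} be difference-of-convex as above, with convexifications J̄(x; z) = J₁(x) − [ J₂(z) + ∇J₂(z)·(x − z) ] and ḡ_i(x; z) = g_{i,1}(x) − [ g_{i,2}(z) + ∇g_{i,2}(z)·(x − z) ]. Suppose x^{(q)} ∈ F̄(x^{(q)}) := {x : ḡ_i(x; x^{(q)}) ≤ 0 ∀i}, and x^{(q+1)} minimizes J̄(·; x^{(q)}) over F̄(x^{(q)}). Then the true cost is non-increasing: J(x^{(q+1)}) ≤ J̄(x^{(q+1)}; x^{(q)}) ≤ J̄(x^{(q)}; x^{(q)}) = J(x^{(q)}). -/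
/-!
Since `J₂` is convex, it lies above its tangent plane at `x⁽q⁾`; hence the convexified objective
`J̄(·; x⁽q⁾)` majorizes `J` on `Ω`, with equality at `x⁽q⁾`. The middle inequality is the
minimality of `x⁽q⁺¹⁾`, tested against the feasible point `x⁽q⁾`.
-/

open Set RealInnerProductSpace

theorem ConvexOn.le_sub_of_hasFDerivAt {E : Type*} [NormedAddCommGroup E] [NormedSpace ℝ E]
    {s : Set E} {f : E → ℝ} {f' : E →L[ℝ] ℝ} {x z : E} (hf : ConvexOn ℝ s f) (hz : z ∈ s)
    (hx : x ∈ s) (hf' : HasFDerivAt f f' z) : f' (x - z) ≤ f x - f z := by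
  have hline : ConvexOn ℝ (AffineMap.lineMap (k := ℝ) z x ⁻¹' s) (f ∘ AffineMap.lineMap z x) :=
    hf.comp_affineMap _
  have hderiv : HasDerivAt (f ∘ AffineMap.lineMap (k := ℝ) z x) (f' (x - z)) 0 :=
    hf'.comp_hasDerivAt_of_eq 0 AffineMap.hasDerivAt_lineMap (by simp)
  simpa [slope_def_field] using
    hline.le_slope_of_hasDerivAt (by simpa using hz) (by simpa using hx) zero_lt_one hderiv

theorem ConvexOn.inner_le_sub_of_hasGradientAt {E : Type*} [NormedAddCommGroup E]
    [InnerProductSpace ℝ E] [CompleteSpace E] {s : Set E} {f : E → ℝ} {f' x z : E}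
    (hf : ConvexOn ℝ s f) (hz : z ∈ s) (hx : x ∈ s) (hf' : HasGradientAt f f' z) :
    ⟪f', x - z⟫ ≤ f x - f z :=
  hf.le_sub_of_hasFDerivAt hz hx hf'.hasFDerivAt

theorem statement_16_general {n m : ℕ}
    (Ω : Set (EuclideanSpace ℝ (Fin n)))
    (J J1 J2 : EuclideanSpace ℝ (Fin n) → ℝ)
    (hJ : ∀ x ∈ Ω, J x = J1 x - J2 x)
    (hJ2 : ConvexOn ℝ Ω J2)
    (GJ : EuclideanSpace ℝ (Fin n) → EuclideanSpace ℝ (Fin n))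
    (hGJ : ∀ z ∈ Ω, HasGradientAt J2 (GJ z) z)
    (Jbar : EuclideanSpace ℝ (Fin n) → EuclideanSpace ℝ (Fin n) → ℝ)
    (hJbar : ∀ x z, Jbar x z = J1 x - (J2 z + ⟪GJ z, x - z⟫))
    (gbar : Fin m → EuclideanSpace ℝ (Fin n) → EuclideanSpace ℝ (Fin n) → ℝ)
    (Fbar : EuclideanSpace ℝ (Fin n) → Set (EuclideanSpace ℝ (Fin n)))
    (hFbar : ∀ z, Fbar z = {x ∈ Ω | ∀ i, gbar i x z ≤ 0})
    (xq xq1 : EuclideanSpace ℝ (Fin n))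
    (hxq : xq ∈ Fbar xq)
    (hxq1 : xq1 ∈ Fbar xq)
    (hxq1min : ∀ y ∈ Fbar xq, Jbar xq1 xq ≤ Jbar y xq) :
    J xq1 ≤ Jbar xq1 xq ∧ Jbar xq1 xq ≤ Jbar xq xq ∧ Jbar xq xq = J xq := by
  have hxqΩ : xq ∈ Ω := by rw [hFbar] at hxq; exact hxq.1
  have hxq1Ω : xq1 ∈ Ω := by rw [hFbar] at hxq1; exact hxq1.1
  have htangent := hJ2.inner_le_sub_of_hasGradientAt hxqΩ hxq1Ω (hGJ xq hxqΩ)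
  refine ⟨?_, hxq1min xq hxq, ?_⟩
  · rw [hJ xq1 hxq1Ω, hJbar]
    linarith
  · rw [hJbar, hJ xq hxqΩ, sub_self, inner_zero_right, add_zero]

/-- monotone cost decrease of the SCP/DC iteration: with objective
`J = J₁ − J₂` (both convex on `Ω`, `J₂` differentiable with gradient `GJ z` at `z`),
DC constraints `g i = g1 i − g2 i` convexified at `z` as `ḡ i x z`, convexified objective
`J̄(x; z) = J₁ x − [J₂ z + ⟪GJ z, x − z⟫]` and convexified feasible set
`F̄(z) = {x ∈ Ω : ∀ i, ḡ i x z ≤ 0}`: if `x⁽q⁾ ∈ F̄(x⁽q⁾)` and `x⁽q⁺¹⁾` minimizes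
`J̄(·; x⁽q⁾)` over `F̄(x⁽q⁾)`, then
`J(x⁽q⁺¹⁾) ≤ J̄(x⁽q⁺¹⁾; x⁽q⁾) ≤ J̄(x⁽q⁾; x⁽q⁾) = J(x⁽q⁾)`. -/
theorem statement_16 {n m : ℕ}
    (Ω : Set (EuclideanSpace ℝ (Fin n))) (hΩne : Ω.Nonempty) (hΩconv : Convex ℝ Ω)
    (J J1 J2 : EuclideanSpace ℝ (Fin n) → ℝ)
    (hJ : ∀ x ∈ Ω, J x = J1 x - J2 x)
    (hJ1 : ConvexOn ℝ Ω J1) (hJ2 : ConvexOn ℝ Ω J2)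
    (GJ : EuclideanSpace ℝ (Fin n) → EuclideanSpace ℝ (Fin n))
    (hGJ : ∀ z ∈ Ω, HasGradientAt J2 (GJ z) z)
    (Jbar : EuclideanSpace ℝ (Fin n) → EuclideanSpace ℝ (Fin n) → ℝ)
    (hJbar : ∀ x z, Jbar x z = J1 x - (J2 z + ⟪GJ z, x - z⟫))
    (g g1 g2 : Fin m → EuclideanSpace ℝ (Fin n) → ℝ)
    (hg : ∀ i, ∀ x ∈ Ω, g i x = g1 i x - g2 i x)
    (hg1 : ∀ i, ConvexOn ℝ Ω (g1 i)) (hg2 : ∀ i, ConvexOn ℝ Ω (g2 i))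
    (G : Fin m → EuclideanSpace ℝ (Fin n) → EuclideanSpace ℝ (Fin n))
    (hG : ∀ i, ∀ z ∈ Ω, HasGradientAt (g2 i) (G i z) z)
    (gbar : Fin m → EuclideanSpace ℝ (Fin n) → EuclideanSpace ℝ (Fin n) → ℝ)
    (hgbar : ∀ i x z, gbar i x z = g1 i x - (g2 i z + ⟪G i z, x - z⟫))
    (Fbar : EuclideanSpace ℝ (Fin n) → Set (EuclideanSpace ℝ (Fin n)))
    (hFbar : ∀ z, Fbar z = {x ∈ Ω | ∀ i, gbar i x z ≤ 0})
    (xq xq1 : EuclideanSpace ℝ (Fin n))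
    (hxq : xq ∈ Fbar xq)
    (hxq1 : xq1 ∈ Fbar xq)
    (hxq1min : ∀ y ∈ Fbar xq, Jbar xq1 xq ≤ Jbar y xq) :
    J xq1 ≤ Jbar xq1 xq ∧ Jbar xq1 xq ≤ Jbar xq xq ∧ Jbar xq xq = J xq :=
  statement_16_general Ω J J1 J2 hJ hJ2 GJ hGJ Jbar hJbar gbar Fbar hFbar xq xq1 hxq hxq1 hxq1min
end
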